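/- Let (δ, ω̄, ω̲, γ) be a positive solution of system (I) at parameters s̄ ≥ 0 and z > 0. Then Δ ≥ l²/((1 + N·(s̄·r² + r⁴)/(L·z))²·(1 + N·r⁴/(M·z))²·r³); in particular Δ > 0. -/

import Mathlib

open Matrix
open scoped Matrix.Norms.L2Operator ComplexOrder

noncomputable section

set_option maxHeartbeats 2000000
set_option linter.unusedSectionVars false

namespace Matrix.PosSemidef

open scoped MatrixOrder

variable {n : Type*} [Fintype n] [DecidableEq n]

def sqrt {A : Matrix n n ℂ} (_hA : A.PosSemidef) : Matrix n n ℂ := CFC.sqrt A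

lemma sqrt_mul_self {A : Matrix n n ℂ} (hA : A.PosSemidef) : hA.sqrt * hA.sqrt = A :=
  CFC.sqrt_mul_sqrt_self A hA.nonneg

lemma posSemidef_sqrt {A : Matrix n n ℂ} (hA : A.PosSemidef) : hA.sqrt.PosSemidef :=
  (CFC.sqrt_nonneg A).posSemidef

end Matrix.PosSemidef

namespace SystemIAux

variable {n : Type*} [Fintype n] [DecidableEq n]

lemma psd_smul {A : Matrix n n ℂ} {c : ℝ} (hc : 0 ≤ c) (hA : A.PosSemidef) :
    (c • A).PosSemidef := by
  refine posSemidef_iff_dotProduct_mulVec.mpr ⟨?_, ?_⟩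
  · unfold Matrix.IsHermitian
    rw [conjTranspose_smul, star_trivial, hA.1]
  · intro x
    have h0 : (c • A) *ᵥ x = c • (A *ᵥ x) := smul_mulVec c A x
    rw [h0]
    have h1 : star x ⬝ᵥ (c • (A *ᵥ x)) = (c : ℂ) * (star x ⬝ᵥ (A *ᵥ x)) := by
      rw [dotProduct_smul]
      simp [Complex.real_smul]
    rw [h1]
    exact mul_nonneg (by exact_mod_cast hc) (hA.dotProduct_mulVec_nonneg x)

lemma psd_trace_nonneg {A : Matrix n n ℂ} (hA : A.PosSemidef) : 0 ≤ A.trace := by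
  unfold Matrix.trace
  apply Finset.sum_nonneg
  intro i _
  have h := hA.dotProduct_mulVec_nonneg (Pi.single i 1)
  have h1 : (star (Pi.single i (1:ℂ)) : n → ℂ) = Pi.single i (1:ℂ) := by
    ext j; by_cases hji : j = i <;> simp [Pi.single_apply, hji]
  rw [h1] at h
  simpa [single_dotProduct] using h

lemma psd_trace_re_nonneg {A : Matrix n n ℂ} (hA : A.PosSemidef) : 0 ≤ A.trace.re :=
  (Complex.le_def.mp (psd_trace_nonneg hA)).1

lemma psd_mul_trace_re_nonneg {A B : Matrix n n ℂ} (hA : A.PosSemidef) (hB : B.PosSemidef) :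
    0 ≤ ((A * B).trace).re := by
  have hs : hA.sqrt * hA.sqrt = A := hA.sqrt_mul_self
  have h1 : (hA.sqrt * B * hA.sqrt).trace = (A * B).trace := by
    rw [Matrix.trace_mul_cycle, hs]
  rw [← h1]
  have hpsd : (hA.sqrt * B * hA.sqrt).PosSemidef := by
    have := hB.conjTranspose_mul_mul_same hA.sqrt
    rwa [hA.posSemidef_sqrt.1] at this
  exact psd_trace_re_nonneg hpsd

lemma trace_re_mono {A B C : Matrix n n ℂ} (hA : A.PosSemidef) (h : (C - B).PosSemidef) :
    ((A * B).trace).re ≤ ((A * C).trace).re := by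
  have h0 := psd_mul_trace_re_nonneg hA h
  rw [Matrix.mul_sub, Matrix.trace_sub, Complex.sub_re] at h0
  linarith

lemma psd_smul_one_sub_of_norm_le {A : Matrix n n ℂ} {r : ℝ} (hA : A.PosSemidef)
    (hr : ‖A‖ ≤ r) : (r • (1 : Matrix n n ℂ) - A).PosSemidef := by
  refine posSemidef_iff_dotProduct_mulVec.mpr ⟨?_, ?_⟩
  · unfold Matrix.IsHermitian
    rw [conjTranspose_sub, conjTranspose_smul, star_trivial, conjTranspose_one, hA.1]
  · intro x
    have hmv : (r • (1 : Matrix n n ℂ) - A) *ᵥ x = r • x - A *ᵥ x := by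
      rw [Matrix.sub_mulVec, smul_mulVec, one_mulVec]
    rw [hmv, dotProduct_sub]
    set d : ℂ := star x ⬝ᵥ (A *ᵥ x) with hd
    have hd0 : 0 ≤ d := hA.dotProduct_mulVec_nonneg x
    have hdre : d.im = 0 := ((Complex.le_def.mp hd0).2).symm
    set x' : EuclideanSpace ℂ n := (WithLp.equiv 2 _).symm x with hx'
    set y' : EuclideanSpace ℂ n := (WithLp.equiv 2 _).symm (A *ᵥ x) with hy'
    have hinner : (inner ℂ x' y' : ℂ) = d := by
      exact dotProduct_comm (A *ᵥ x) (star x)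
    have hCS : ‖(inner ℂ x' y' : ℂ)‖ ≤ ‖x'‖ * ‖y'‖ := norm_inner_le_norm x' y'
    have hAx : ‖y'‖ ≤ r * ‖x'‖ := by
      have h0 := A.l2_opNorm_mulVec x'
      calc ‖y'‖ ≤ ‖A‖ * ‖x'‖ := h0
        _ ≤ r * ‖x'‖ := by
            apply mul_le_mul_of_nonneg_right hr (norm_nonneg _)
    have hdle : d.re ≤ r * (‖x'‖ * ‖x'‖) := by
      have h1 : d.re ≤ ‖d‖ := Complex.re_le_norm d
      have h2 : ‖d‖ ≤ ‖x'‖ * ‖y'‖ := by rw [← hinner]; exact hCS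
      have h3 : ‖x'‖ * ‖y'‖ ≤ ‖x'‖ * (r * ‖x'‖) :=
        mul_le_mul_of_nonneg_left hAx (norm_nonneg _)
      nlinarith [norm_nonneg x']
    have hsx : star x ⬝ᵥ (r • x) = (r : ℂ) * (star x ⬝ᵥ x) := by
      rw [dotProduct_smul]
      simp [Complex.real_smul]
    have hxx2 : (star x ⬝ᵥ x : ℂ) = (inner ℂ x' x' : ℂ) := by
      exact dotProduct_comm (star x) x
    have hnorm : (inner ℂ x' x' : ℂ) = (‖x'‖ : ℂ) ^ 2 := by
      exact_mod_cast inner_self_eq_norm_sq_to_K (𝕜 := ℂ) x'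
    have hnorm2 : ((‖x'‖ : ℂ)) ^ 2 = ((‖x'‖ ^ 2 : ℝ) : ℂ) := by push_cast; ring
    rw [hsx, hxx2, hnorm, hnorm2, ← Complex.ofReal_mul]
    rw [Complex.le_def]
    constructor
    · simp only [Complex.zero_re, Complex.sub_re, Complex.ofReal_re]
      nlinarith [hdle]
    · simp only [Complex.zero_im, Complex.sub_im, Complex.ofReal_im, hdre]
      ring

lemma herm_sandwich_psd {F G : Matrix n n ℂ} (hF : F.IsHermitian) (hG : G.PosSemidef) :
    (F * G * F).PosSemidef := by
  have := hG.conjTranspose_mul_mul_same F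
  rwa [hF] at this

lemma trace_re_le_card_mul {A : Matrix n n ℂ} {r : ℝ} (hA : A.PosSemidef) (h : ‖A‖ ≤ r) :
    (A.trace).re ≤ (Fintype.card n : ℝ) * r := by
  have h0 := psd_trace_re_nonneg (psd_smul_one_sub_of_norm_le hA h)
  rw [Matrix.trace_sub, Matrix.trace_smul, Matrix.trace_one, Complex.sub_re] at h0
  have h1 : ((r • (Fintype.card n : ℂ)).re) = r * (Fintype.card n : ℝ) := by
    rw [Complex.real_smul]
    simp [Complex.re_ofReal_mul]
  rw [h1] at h0
  linarith

lemma isHermitian_real_smul {c : ℝ} {A : Matrix n n ℂ} (hA : A.IsHermitian) :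
    (c • A).IsHermitian := by
  unfold Matrix.IsHermitian
  rw [conjTranspose_smul, star_trivial, hA]

lemma inv_isHermitian {A : Matrix n n ℂ} (hA : A.IsHermitian) : (A⁻¹).IsHermitian := by
  unfold Matrix.IsHermitian
  rw [Matrix.conjTranspose_nonsing_inv, hA]

lemma m_mul_inv {A : Matrix n n ℂ} (h : IsUnit A) : A * A⁻¹ = 1 :=
  Matrix.mul_nonsing_inv A ((Matrix.isUnit_iff_isUnit_det A).mp h)

lemma m_inv_mul {A : Matrix n n ℂ} (h : IsUnit A) : A⁻¹ * A = 1 :=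
  Matrix.nonsing_inv_mul A ((Matrix.isUnit_iff_isUnit_det A).mp h)

lemma psd_mul_self {A : Matrix n n ℂ} (hA : A.PosSemidef) : (A * A).PosSemidef := by
  have h := hA.pow 2
  rwa [pow_two] at h

lemma re_val {x : ℝ} {m : ℕ} {T : ℂ} (h : (x : ℂ) = (m : ℂ)⁻¹ * T) :
    x = (1 / (m : ℝ)) * T.re := by
  have h0 : ((m : ℂ))⁻¹ = (((1 / (m : ℝ)) : ℝ) : ℂ) := by push_cast; ring
  have h1 := congrArg Complex.re h
  rw [Complex.ofReal_re, h0, Complex.re_ofReal_mul] at h1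
  exact h1

lemma trace_smul_re (c : ℝ) (A : Matrix n n ℂ) : ((c • A).trace).re = c * (A.trace).re := by
  rw [Matrix.trace_smul, Complex.real_smul, Complex.re_ofReal_mul]

end SystemIAux

open SystemIAux


/-- A quadruple of reals `(δ, ωb, ωu, γ)` is a solution of system (I) at parameters
`(sbar, z)`: the four fixed-point equations hold and all inverted matrices are invertible. -/
def IsSolutionSystemI (N L M : ℕ)
    (R1 : Matrix (Fin N) (Fin N) ℂ) (T1 R2 : Matrix (Fin L) (Fin L) ℂ)
    (T2 : Matrix (Fin M) (Fin M) ℂ) (sbar z δ ωb ωu γ : ℝ) : Prop :=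
  IsUnit (z • (1 : Matrix (Fin N) (Fin N) ℂ) + (sbar * ωb + γ * ωu) • R1) ∧
  IsUnit ((1 : Matrix (Fin L) (Fin L) ℂ) + (sbar * δ) • T1 + (δ * γ) • (R2 * T1)) ∧
  IsUnit ((1 : Matrix (Fin M) (Fin M) ℂ) + ((L / M : ℝ) * δ * ωu) • T2) ∧
  (δ : ℂ) = (L : ℂ)⁻¹ *
    (R1 * (z • (1 : Matrix (Fin N) (Fin N) ℂ) + (sbar * ωb + γ * ωu) • R1)⁻¹).trace ∧
  (ωb : ℂ) = (L : ℂ)⁻¹ *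
    (T1 * ((1 : Matrix (Fin L) (Fin L) ℂ) + (sbar * δ) • T1 + (δ * γ) • (R2 * T1))⁻¹).trace ∧
  (ωu : ℂ) = (L : ℂ)⁻¹ *
    (R2 * T1 * ((1 : Matrix (Fin L) (Fin L) ℂ) + (sbar * δ) • T1 + (δ * γ) • (R2 * T1))⁻¹).trace ∧
  (γ : ℂ) = (M : ℂ)⁻¹ *
    (T2 * ((1 : Matrix (Fin M) (Fin M) ℂ) + ((L / M : ℝ) * δ * ωu) • T2)⁻¹).trace

theorem systemI_Delta_lower_bound
    (N L M : ℕ) (hN : 0 < N) (hL : 0 < L) (hM : 0 < M)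
    (R1 : Matrix (Fin N) (Fin N) ℂ) (T1 R2 : Matrix (Fin L) (Fin L) ℂ)
    (T2 : Matrix (Fin M) (Fin M) ℂ)
    (hR1 : R1.PosSemidef) (hT1 : T1.PosSemidef) (hR2 : R2.PosSemidef) (hT2 : T2.PosSemidef)
    (r l : ℝ) (hr : 0 < r) (hl : 0 < l)
    (hR1r : ‖R1‖ ≤ r) (hT1r : ‖T1‖ ≤ r) (hR2r : ‖R2‖ ≤ r) (hT2r : ‖T2‖ ≤ r)
    (hl1 : l ≤ (1 / L : ℝ) * ((R2 * T1).trace).re)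
    (hl2 : l ≤ (1 / N : ℝ) * (R1.trace).re)
    (hl3 : l ≤ (1 / L : ℝ) * (R2.trace).re)
    (hl4 : l ≤ (1 / L : ℝ) * (T1.trace).re)
    (hl5 : l ≤ (1 / M : ℝ) * (T2.trace).re)
    (sbar z : ℝ) (hs : 0 ≤ sbar) (hz : 0 < z)
    (δ ωb ωu γ : ℝ) (hδ : 0 < δ) (hωb : 0 < ωb) (hωu : 0 < ωu) (hγ : 0 < γ)
    (hsol : IsSolutionSystemI N L M R1 T1 R2 T2 sbar z δ ωb ωu γ)
    (Fd : Matrix (Fin N) (Fin N) ℂ)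
    (hFd : Fd = (z • (1 : Matrix (Fin N) (Fin N) ℂ) + (sbar * ωb + γ * ωu) • R1)⁻¹)
    (Fo : Matrix (Fin L) (Fin L) ℂ)
    (hFo : Fo = ((1 : Matrix (Fin L) (Fin L) ℂ) + (sbar * δ) • T1 + (δ * γ) • (R2 * T1))⁻¹)
    (Fg : Matrix (Fin M) (Fin M) ℂ)
    (hFg : Fg = ((1 : Matrix (Fin M) (Fin M) ℂ) + ((L / M : ℝ) * δ * ωu) • T2)⁻¹)
    (δ₂ δ₂I ωb₂ ωu₂ ωu₂I κ γ₂ ς Δ ΔV1 : ℝ)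
    (hδ₂ : δ₂ = (1 / L : ℝ) * (((R1 * Fd) * (R1 * Fd)).trace).re)
    (hδ₂I : δ₂I = (1 / L : ℝ) * ((R1 * (Fd * Fd)).trace).re)
    (hωb₂ : ωb₂ = (1 / L : ℝ) * (((T1 * Fo) * (T1 * Fo)).trace).re)
    (hωu₂ : ωu₂ = (1 / L : ℝ) * (((R2 * T1 * Fo) * (R2 * T1 * Fo)).trace).re)
    (hωu₂I : ωu₂I = (1 / L : ℝ) * ((R2 * T1 * (Fo * Fo)).trace).re)
    (hκ : κ = (1 / L : ℝ) * ((T1 * Fo * (R2 * T1) * Fo).trace).re)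
    (hγ₂ : γ₂ = (1 / M : ℝ) * (((T2 * Fg) * (T2 * Fg)).trace).re)
    (hς : ς = 2 * sbar * γ * κ + γ ^ 2 * ωu₂ + sbar ^ 2 * ωb₂)
    (hΔ : Δ = 1 - (L / M : ℝ) * γ₂ * ωu₂ * δ ^ 2)
    (hΔV1 : ΔV1 = (1 - ς * δ₂) * Δ - (L / M : ℝ) * γ₂ * ωu₂I ^ 2 * δ₂)
    :
    l ^ 2 / ((1 + (N : ℝ) * (sbar * r ^ 2 + r ^ 4) / (L * z)) ^ 2 *
        (1 + (N : ℝ) * r ^ 4 / (M * z)) ^ 2 * r ^ 3) ≤ Δ ∧ 0 < Δ := by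
  obtain ⟨hUd, hUo, hUg, heqδ, heqωb, heqωu, heqγ⟩ := hsol
  have hL0 : (0:ℝ) < (L:ℝ) := by exact_mod_cast hL
  have hM0 : (0:ℝ) < (M:ℝ) := by exact_mod_cast hM
  have hN0 : (0:ℝ) ≤ (N:ℝ) := Nat.cast_nonneg N
  -- ## The δ block
  set α : ℝ := sbar * ωb + γ * ωu with hα_def
  have hα : 0 < α := add_pos_of_nonneg_of_pos (mul_nonneg hs hωb.le) (mul_pos hγ hωu)
  set Ed : Matrix (Fin N) (Fin N) ℂ := z • (1 : Matrix (Fin N) (Fin N) ℂ) + α • R1 with hEd_def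
  have hEdH : Ed.IsHermitian :=
    (isHermitian_real_smul Matrix.isHermitian_one).add (isHermitian_real_smul hR1.1)
  have hFdH : Fd.IsHermitian := by rw [hFd]; exact inv_isHermitian hEdH
  have hFdEd : Fd * Ed = 1 := by rw [hFd]; exact m_inv_mul hUd
  have hEdFd : Ed * Fd = 1 := by rw [hFd]; exact m_mul_inv hUd
  set Gd : Matrix (Fin N) (Fin N) ℂ := z • R1 + α • (R1 * R1) with hGd_def
  have hGdpsd : Gd.PosSemidef := (psd_smul hz.le hR1).add (psd_smul hα.le (psd_mul_self hR1))
  have hEdR1 : Ed * R1 = Gd := by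
    rw [hEd_def, hGd_def, Matrix.add_mul, smul_mul_assoc, smul_mul_assoc, Matrix.one_mul]
  have hR1Fd_eq : R1 * Fd = Fd * (Gd * Fd) := by
    calc R1 * Fd = 1 * (R1 * Fd) := by rw [Matrix.one_mul]
      _ = (Fd * Ed) * (R1 * Fd) := by rw [hFdEd]
      _ = Fd * ((Ed * R1) * Fd) := by simp only [Matrix.mul_assoc]
      _ = Fd * (Gd * Fd) := by rw [hEdR1]
  have hR1Fd_psd : (R1 * Fd).PosSemidef := by
    rw [hR1Fd_eq, ← Matrix.mul_assoc]
    exact herm_sandwich_psd hFdH hGdpsd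
  have h1subzFd : ((1 : Matrix (Fin N) (Fin N) ℂ) - z • Fd).PosSemidef := by
    have h0 : Ed * Fd = z • Fd + α • (R1 * Fd) := by
      rw [hEd_def, Matrix.add_mul, smul_mul_assoc, smul_mul_assoc, Matrix.one_mul]
    have h1 : (1 : Matrix (Fin N) (Fin N) ℂ) - z • Fd = α • (R1 * Fd) := by
      rw [← hEdFd, h0]; abel
    rw [h1]
    exact psd_smul hα.le hR1Fd_psd
  rw [← hFd] at heqδ
  have hδval : δ = (1 / (L:ℝ)) * ((R1 * Fd).trace).re := re_val heqδ
  have htrR1 : (R1.trace).re ≤ (N:ℝ) * r := by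
    simpa [Fintype.card_fin] using trace_re_le_card_mul hR1 hR1r
  have hδ_le : δ ≤ (N:ℝ) * r / ((L:ℝ) * z) := by
    have hm := trace_re_mono hR1 h1subzFd
    rw [Matrix.mul_one, mul_smul_comm, trace_smul_re] at hm
    have htr : ((R1 * Fd).trace).re = (L:ℝ) * δ := by rw [hδval]; field_simp
    rw [htr] at hm
    rw [le_div_iff₀ (by positivity)]
    have e2 : δ * ((L:ℝ) * z) = z * ((L:ℝ) * δ) := by ring
    linarith
  -- ## The ω block
  set D : Matrix (Fin L) (Fin L) ℂ := sbar • (1 : Matrix (Fin L) (Fin L) ℂ) + γ • R2 with hD_def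
  have hDpsd : D.PosSemidef := (psd_smul hs Matrix.PosSemidef.one).add (psd_smul hγ.le hR2)
  set E : Matrix (Fin L) (Fin L) ℂ :=
    (1 : Matrix (Fin L) (Fin L) ℂ) + (sbar * δ) • T1 + (δ * γ) • (R2 * T1) with hE_def
  have hEFo : E * Fo = 1 := by rw [hFo]; exact m_mul_inv hUo
  set S : Matrix (Fin L) (Fin L) ℂ := hT1.sqrt with hS_def
  have hSS : S * S = T1 := hT1.sqrt_mul_self
  have hSH : S.IsHermitian := hT1.posSemidef_sqrt.1
  set G : Matrix (Fin L) (Fin L) ℂ :=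
    (1 : Matrix (Fin L) (Fin L) ℂ) + δ • (S * D * S) with hG_def
  have hSDS : (S * D * S).PosSemidef := herm_sandwich_psd hSH hDpsd
  have hGpd : G.PosDef := Matrix.PosDef.one.add_posSemidef (psd_smul hδ.le hSDS)
  have hGunit : IsUnit G := hGpd.isUnit
  set H : Matrix (Fin L) (Fin L) ℂ := G⁻¹ with hH_def
  have hHpd : H.PosDef := hGpd.inv
  have hHpsd : H.PosSemidef := hHpd.posSemidef
  have hGH : G * H = 1 := m_mul_inv hGunit
  have hHG : H * G = 1 := m_inv_mul hGunit
  have hGS : G * S = S * E := by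
    rw [hG_def, hE_def, hD_def, ← hSS]
    simp only [Matrix.add_mul, Matrix.mul_add, smul_mul_assoc, mul_smul_comm, Matrix.one_mul,
      Matrix.mul_one, Matrix.mul_assoc, smul_add, smul_smul]
    module
  have hSFo : S * Fo = H * S := by
    have h1 : G * (S * Fo) = S := by
      rw [← Matrix.mul_assoc, hGS, Matrix.mul_assoc, hEFo, Matrix.mul_one]
    calc S * Fo = (H * G) * (S * Fo) := by rw [hHG, Matrix.one_mul]
      _ = H * (G * (S * Fo)) := by simp only [Matrix.mul_assoc]
      _ = H * S := by rw [h1]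
  have hP : T1 * Fo = S * (H * S) := by rw [← hSS, Matrix.mul_assoc, hSFo]
  set J : Matrix (Fin L) (Fin L) ℂ := hHpsd.sqrt with hJ_def
  have hJJ : J * J = H := hHpsd.sqrt_mul_self
  have hJH : J.IsHermitian := hHpsd.posSemidef_sqrt.1
  have hJHcomm : J * H = H * J := by
    rw [← hJJ]; simp only [Matrix.mul_assoc]
  have hJG : G * J = J * G := by
    have h2 : G * (J * H) * G = G * J := by
      simp only [Matrix.mul_assoc, hHG, Matrix.mul_one]
    have h3 : G * (H * J) * G = J * G := by
      calc G * (H * J) * G = (G * H) * (J * G) := by simp only [Matrix.mul_assoc]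
        _ = J * G := by rw [hGH, Matrix.one_mul]
    rw [← h2, hJHcomm, h3]
  have hJGJ : J * G * J = 1 := by
    have h1 : J * G * J = G * (J * J) := by
      rw [show J * G = G * J from hJG.symm]; simp only [Matrix.mul_assoc]
    rw [h1, hJJ, hGH]
  have hKey1 : δ • (J * (S * D * S) * J) = 1 - H := by
    have hG1 : G - 1 = δ • (S * D * S) := by rw [hG_def]; abel
    calc δ • (J * (S * D * S) * J) = J * (δ • (S * D * S)) * J := by
          simp only [mul_smul_comm, smul_mul_assoc]
      _ = J * (G - 1) * J := by rw [← hG1]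
      _ = J * G * J - J * J := by
          simp only [Matrix.mul_sub, Matrix.sub_mul, Matrix.mul_one, Matrix.one_mul]
      _ = 1 - H := by rw [hJGJ, hJJ]
  set K : Matrix (Fin L) (Fin L) ℂ := J * S * R2 * (S * J) with hK_def
  have hKpsd : K.PosSemidef := by
    have h := hR2.conjTranspose_mul_mul_same (S * J)
    have hadj : (S * J)ᴴ = J * S := by rw [conjTranspose_mul, hSH, hJH]
    rw [hadj] at h
    rw [hK_def]
    exact h
  have hJT1J_psd : (J * T1 * J).PosSemidef := herm_sandwich_psd hJH hT1
  have hKey2 : (1 : Matrix (Fin L) (Fin L) ℂ) - (γ * δ) • K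
      = (δ * sbar) • (J * T1 * J) + H := by
    have hexp : δ • (J * (S * D * S) * J)
        = (δ * sbar) • (J * T1 * J) + (δ * γ) • K := by
      rw [hD_def, hK_def, ← hSS]
      simp only [Matrix.mul_add, Matrix.add_mul, smul_mul_assoc, mul_smul_comm,
        Matrix.one_mul, Matrix.mul_one, Matrix.mul_assoc, smul_add, smul_smul]
      try module
    have h2 := hKey1
    rw [hexp] at h2
    rw [show (γ * δ) = (δ * γ) from mul_comm γ δ]
    have h3 : (δ * γ) • K = 1 - H - (δ * sbar) • (J * T1 * J) := by rw [← h2]; abel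
    rw [h3]
    abel
  have hUnsub : ((1 : Matrix (Fin L) (Fin L) ℂ) - (γ * δ) • K).PosSemidef := by
    rw [hKey2]
    exact (psd_smul (mul_nonneg hδ.le hs) hJT1J_psd).add hHpsd
  rw [← hFo] at heqωu
  have hωuval : ωu = (1 / (L:ℝ)) * ((R2 * T1 * Fo).trace).re := re_val heqωu
  have htrK1 : (R2 * T1 * Fo).trace = K.trace := by
    have e1 : R2 * T1 * Fo = (R2 * (S * J)) * (J * S) := by
      rw [Matrix.mul_assoc, hP, ← hJJ]; simp only [Matrix.mul_assoc]
    rw [e1, Matrix.trace_mul_comm]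
    congr 1
    simp only [hK_def, Matrix.mul_assoc]
  have htrK2 : ((R2 * T1 * Fo) * (R2 * T1 * Fo)).trace = (K * K).trace := by
    have e1 : R2 * T1 * Fo = (R2 * (S * J)) * (J * S) := by
      rw [Matrix.mul_assoc, hP, ← hJJ]; simp only [Matrix.mul_assoc]
    rw [e1]
    calc (((R2 * (S * J)) * (J * S)) * ((R2 * (S * J)) * (J * S))).trace
        = ((R2 * (S * J)) * ((J * S) * ((R2 * (S * J)) * (J * S)))).trace := by
          simp only [Matrix.mul_assoc]
      _ = (((J * S) * ((R2 * (S * J)) * (J * S))) * (R2 * (S * J))).trace :=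
          Matrix.trace_mul_comm _ _
      _ = (K * K).trace := by simp only [hK_def, Matrix.mul_assoc]
  have hKstep : γ * δ * ((K * K).trace).re ≤ (K.trace).re := by
    have h0 := psd_mul_trace_re_nonneg hKpsd hUnsub
    have e : K * ((1 : Matrix (Fin L) (Fin L) ℂ) - (γ * δ) • K) = K - (γ * δ) • (K * K) := by
      rw [Matrix.mul_sub, Matrix.mul_one, mul_smul_comm]
    rw [e, Matrix.trace_sub, Complex.sub_re, trace_smul_re] at h0
    linarith
  have hωu₂key : γ * δ * ωu₂ ≤ ωu := by
    rw [hωu₂, htrK2, hωuval, htrK1]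
    have h1 := mul_le_mul_of_nonneg_left hKstep (le_of_lt (show (0:ℝ) < 1/(L:ℝ) by positivity))
    calc γ * δ * ((1 / (L:ℝ)) * ((K * K).trace).re)
        = (1 / (L:ℝ)) * (γ * δ * ((K * K).trace).re) := by ring
      _ ≤ (1 / (L:ℝ)) * (K.trace).re := h1
  -- ωu ≤ r² and l ≤ r²
  have h1subH : ((1 : Matrix (Fin L) (Fin L) ℂ) - H).PosSemidef := by
    rw [← hKey1]
    exact psd_smul hδ.le (herm_sandwich_psd hJH hSDS)
  have hT1subP : (T1 - T1 * Fo).PosSemidef := by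
    have e : S * ((1 : Matrix (Fin L) (Fin L) ℂ) - H) * S = T1 - T1 * Fo := by
      calc S * ((1 : Matrix (Fin L) (Fin L) ℂ) - H) * S = S * S - S * H * S := by
            rw [Matrix.mul_sub, Matrix.mul_one, Matrix.sub_mul]
        _ = T1 - T1 * Fo := by rw [hSS, hP, Matrix.mul_assoc]
    rw [← e]
    exact herm_sandwich_psd hSH h1subH
  have htrT1 : (T1.trace).re ≤ (L:ℝ) * r := by
    simpa [Fintype.card_fin] using trace_re_le_card_mul hT1 hT1r
  have htrR2T1 : ((R2 * T1).trace).re ≤ (L:ℝ) * r ^ 2 := by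
    have h2 := trace_re_mono hT1 (psd_smul_one_sub_of_norm_le hR2 hR2r)
    rw [mul_smul_comm, Matrix.mul_one, trace_smul_re] at h2
    have h3 : ((R2 * T1).trace).re = ((T1 * R2).trace).re := by rw [Matrix.trace_mul_comm]
    have h4 : r * (T1.trace).re ≤ r * ((L:ℝ) * r) := mul_le_mul_of_nonneg_left htrT1 hr.le
    have h5 : r * ((L:ℝ) * r) = (L:ℝ) * r ^ 2 := by ring
    linarith
  have hωu_le : ωu ≤ r ^ 2 := by
    have h0 := trace_re_mono hR2 hT1subP
    have e : R2 * T1 * Fo = R2 * (T1 * Fo) := Matrix.mul_assoc _ _ _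
    rw [hωuval, e]
    calc (1 / (L:ℝ)) * ((R2 * (T1 * Fo)).trace).re
        ≤ (1 / (L:ℝ)) * ((R2 * T1).trace).re := by
          apply mul_le_mul_of_nonneg_left h0 (by positivity)
      _ ≤ (1 / (L:ℝ)) * ((L:ℝ) * r ^ 2) := by
          apply mul_le_mul_of_nonneg_left htrR2T1 (by positivity)
      _ = r ^ 2 := by field_simp
  have hl_r2 : l ≤ r ^ 2 := by
    have : (1 / (L:ℝ)) * ((R2 * T1).trace).re ≤ (1 / (L:ℝ)) * ((L:ℝ) * r ^ 2) :=
      mul_le_mul_of_nonneg_left htrR2T1 (by positivity)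
    have e : (1 / (L:ℝ)) * ((L:ℝ) * r ^ 2) = r ^ 2 := by field_simp
    linarith [hl1]
  -- ## The γ block
  set c : ℝ := (L / M : ℝ) * δ * ωu with hc_def
  have hc0 : 0 < c := mul_pos (mul_pos (div_pos hL0 hM0) hδ) hωu
  set Eg : Matrix (Fin M) (Fin M) ℂ := (1 : Matrix (Fin M) (Fin M) ℂ) + c • T2 with hEg_def
  have hEgFg : Eg * Fg = 1 := by rw [hFg]; exact m_mul_inv hUg
  have hFgEg : Fg * Eg = 1 := by rw [hFg]; exact m_inv_mul hUg
  have hEgH : Eg.IsHermitian := Matrix.isHermitian_one.add (isHermitian_real_smul hT2.1)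
  have hFgH : Fg.IsHermitian := by rw [hFg]; exact inv_isHermitian hEgH
  have hGg : Eg * T2 = T2 + c • (T2 * T2) := by
    rw [hEg_def, Matrix.add_mul, Matrix.one_mul, smul_mul_assoc]
  have hVeq : T2 * Fg = Fg * (T2 + c • (T2 * T2)) * Fg := by
    calc T2 * Fg = (Fg * Eg) * (T2 * Fg) := by rw [hFgEg, Matrix.one_mul]
      _ = Fg * ((Eg * T2) * Fg) := by simp only [Matrix.mul_assoc]
      _ = Fg * (T2 + c • (T2 * T2)) * Fg := by rw [hGg, Matrix.mul_assoc]
  have hVpsd : (T2 * Fg).PosSemidef := by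
    rw [hVeq]
    exact herm_sandwich_psd hFgH (hT2.add (psd_smul hc0.le (psd_mul_self hT2)))
  have hcT2Fg : c • (T2 * Fg) = 1 - Fg := by
    have h := hEgFg
    rw [hEg_def, Matrix.add_mul, Matrix.one_mul, smul_mul_assoc] at h
    rw [← h]; abel
  rw [← hFg] at heqγ
  have hγval : γ = (1 / (M:ℝ)) * ((T2 * Fg).trace).re := re_val heqγ
  have hIdγ : c • ((T2 * Fg) * (T2 * Fg)) = T2 * Fg - T2 * (Fg * Fg) := by
    calc c • ((T2 * Fg) * (T2 * Fg)) = (T2 * Fg) * (c • (T2 * Fg)) :=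
          (mul_smul_comm _ _ _).symm
      _ = (T2 * Fg) * (1 - Fg) := by rw [hcT2Fg]
      _ = T2 * Fg - T2 * (Fg * Fg) := by
          rw [Matrix.mul_sub, Matrix.mul_one, Matrix.mul_assoc]
  set γI : ℝ := (1 / (M:ℝ)) * ((T2 * (Fg * Fg)).trace).re with hγI_def
  have hId : c * γ₂ = γ - γI := by
    have h0 := congrArg (fun (X : Matrix (Fin M) (Fin M) ℂ) => (X.trace).re) hIdγ
    simp only [trace_smul_re, Matrix.trace_sub, Complex.sub_re] at h0
    rw [hγ₂, hγval, hγI_def]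
    calc c * ((1 / (M:ℝ)) * (((T2 * Fg) * (T2 * Fg)).trace).re)
        = (1 / (M:ℝ)) * (c * (((T2 * Fg) * (T2 * Fg)).trace).re) := by ring
      _ = (1 / (M:ℝ)) * (((T2 * Fg).trace).re - ((T2 * (Fg * Fg)).trace).re) := by rw [h0]
      _ = (1 / (M:ℝ)) * ((T2 * Fg).trace).re - (1 / (M:ℝ)) * ((T2 * (Fg * Fg)).trace).re := by
          ring
  have h1subFg : ((1 : Matrix (Fin M) (Fin M) ℂ) - Fg).PosSemidef := by
    rw [← hcT2Fg]; exact psd_smul hc0.le hVpsd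
  have htrT2 : (T2.trace).re ≤ (M:ℝ) * r := by
    simpa [Fintype.card_fin] using trace_re_le_card_mul hT2 hT2r
  have hγ_le : γ ≤ r := by
    have h0 := trace_re_mono hT2 h1subFg
    rw [Matrix.mul_one] at h0
    rw [hγval]
    calc (1 / (M:ℝ)) * ((T2 * Fg).trace).re ≤ (1 / (M:ℝ)) * (T2.trace).re := by
          apply mul_le_mul_of_nonneg_left h0 (by positivity)
      _ ≤ (1 / (M:ℝ)) * ((M:ℝ) * r) := by
          apply mul_le_mul_of_nonneg_left htrT2 (by positivity)
      _ = r := by field_simp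
  set t : ℝ := (1 + c * r)⁻¹ with ht_def
  have hcr0 : 0 < 1 + c * r := by linarith [mul_pos hc0 hr]
  have ht_pos : 0 < t := inv_pos.mpr hcr0
  have ht1 : t * (1 + c * r) = 1 := inv_mul_cancel₀ (ne_of_gt hcr0)
  have hrT2 : (r • T2 - T2 * T2).PosSemidef := by
    obtain ⟨s2, hs2H, hs2⟩ :
        ∃ s2 : Matrix (Fin M) (Fin M) ℂ, s2.IsHermitian ∧ s2 * s2 = T2 :=
      ⟨hT2.sqrt, hT2.posSemidef_sqrt.1, hT2.sqrt_mul_self⟩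
    have h0 := herm_sandwich_psd hs2H (psd_smul_one_sub_of_norm_le hT2 hT2r)
    have e : s2 * (r • (1 : Matrix (Fin M) (Fin M) ℂ) - T2) * s2
        = r • T2 - T2 * T2 := by
      rw [← hs2]
      simp only [Matrix.mul_sub, Matrix.sub_mul, mul_smul_comm, smul_mul_assoc,
        Matrix.mul_one, Matrix.one_mul, Matrix.mul_assoc]
    rwa [e] at h0
  have hMps : ((1 : Matrix (Fin M) (Fin M) ℂ) - (t ^ 2) • (Eg * Eg)).PosSemidef := by
    have heq : (1 : Matrix (Fin M) (Fin M) ℂ) - (t ^ 2) • (Eg * Eg)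
        = (t * c * (1 + t)) • (r • (1 : Matrix (Fin M) (Fin M) ℂ) - T2)
          + (t ^ 2 * c ^ 2) • (r • T2 - T2 * T2) := by
      rw [hEg_def]
      simp only [Matrix.mul_add, Matrix.add_mul, Matrix.one_mul, Matrix.mul_one,
        smul_mul_assoc, mul_smul_comm, smul_add, smul_sub, smul_smul]
      match_scalars
      · rw [ht_def]; field_simp; ring
      · rw [ht_def]; field_simp; ring
      · rw [ht_def]; field_simp
    rw [heq]
    have hco1 : (0:ℝ) ≤ t * c * (1 + t) := by positivity
    have hco2 : (0:ℝ) ≤ t ^ 2 * c ^ 2 := by positivity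
    exact (psd_smul hco1 (psd_smul_one_sub_of_norm_le hT2 hT2r)).add (psd_smul hco2 hrT2)
  have hFg2psd : ((Fg * Fg) - (t ^ 2) • (1 : Matrix (Fin M) (Fin M) ℂ)).PosSemidef := by
    have e0 : Fg * (Eg * Eg) * Fg = 1 := by
      calc Fg * (Eg * Eg) * Fg = (Fg * Eg) * (Eg * Fg) := by simp only [Matrix.mul_assoc]
        _ = 1 := by rw [hFgEg, hEgFg, Matrix.one_mul]
    have e : Fg * ((1 : Matrix (Fin M) (Fin M) ℂ) - (t ^ 2) • (Eg * Eg)) * Fg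
        = (Fg * Fg) - (t ^ 2) • (1 : Matrix (Fin M) (Fin M) ℂ) := by
      rw [Matrix.mul_sub, Matrix.sub_mul, mul_smul_comm, smul_mul_assoc, Matrix.mul_one, e0]
    rw [← e]
    exact herm_sandwich_psd hFgH hMps
  have hγIb : t ^ 2 * l ≤ γI := by
    have h0 := trace_re_mono hT2 hFg2psd
    have e1 : T2 * ((t ^ 2) • (1 : Matrix (Fin M) (Fin M) ℂ)) = (t ^ 2) • T2 := by
      rw [mul_smul_comm, Matrix.mul_one]
    rw [e1, trace_smul_re] at h0
    have h2 : (M:ℝ) * l ≤ (T2.trace).re := by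
      have h3 := mul_le_mul_of_nonneg_left hl5 (le_of_lt hM0)
      have e2 : (M:ℝ) * ((1 / (M:ℝ)) * (T2.trace).re) = (T2.trace).re := by field_simp
      linarith
    rw [hγI_def]
    have h4 : t ^ 2 * ((M:ℝ) * l) ≤ t ^ 2 * (T2.trace).re :=
      mul_le_mul_of_nonneg_left h2 (by positivity)
    have h5 : (1 / (M:ℝ)) * (t ^ 2 * (T2.trace).re)
        ≤ (1 / (M:ℝ)) * ((T2 * (Fg * Fg)).trace).re :=
      mul_le_mul_of_nonneg_left h0 (by positivity)
    calc t ^ 2 * l = (1 / (M:ℝ)) * (t ^ 2 * ((M:ℝ) * l)) := by field_simp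
      _ ≤ (1 / (M:ℝ)) * (t ^ 2 * (T2.trace).re) := by
          apply mul_le_mul_of_nonneg_left h4 (by positivity)
      _ ≤ (1 / (M:ℝ)) * ((T2 * (Fg * Fg)).trace).re := h5
  have hγ₂0 : 0 ≤ γ₂ := by
    rw [hγ₂]
    exact mul_nonneg (by positivity) (psd_mul_trace_re_nonneg hVpsd hVpsd)
  -- ## Final assembly
  have e1 : (L / M : ℝ) * γ₂ * ωu₂ * δ ^ 2 * γ ≤ c * γ₂ := by
    have hA0 : (0:ℝ) ≤ (L / M : ℝ) * γ₂ * δ :=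
      mul_nonneg (mul_nonneg (by positivity) hγ₂0) hδ.le
    have h := mul_le_mul_of_nonneg_left hωu₂key hA0
    calc (L / M : ℝ) * γ₂ * ωu₂ * δ ^ 2 * γ
        = (L / M : ℝ) * γ₂ * δ * (γ * δ * ωu₂) := by ring
      _ ≤ (L / M : ℝ) * γ₂ * δ * ωu := h
      _ = c * γ₂ := by rw [hc_def]; ring
  have hΔγ : γI ≤ Δ * γ := by
    have e2 : Δ * γ = γ - (L / M : ℝ) * γ₂ * ωu₂ * δ ^ 2 * γ := by rw [hΔ]; ring
    linarith [e1, hId]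
  have hΔ_ge : γI / γ ≤ Δ := (div_le_iff₀ hγ).mpr hΔγ
  have hγI0 : 0 ≤ γI := le_trans (by positivity) hγIb
  have hq : t ^ 2 * l / r ≤ γI / γ := div_le_div₀ hγI0 hγIb hγ hγ_le
  have hc_le : c ≤ (N:ℝ) * r ^ 3 / ((M:ℝ) * z) := by
    have h1 : (L / M : ℝ) * δ * ωu ≤ (L / M : ℝ) * δ * r ^ 2 :=
      mul_le_mul_of_nonneg_left hωu_le (mul_nonneg (by positivity) hδ.le)
    have h2 : (L / M : ℝ) * δ * r ^ 2 ≤ (L / M : ℝ) * ((N:ℝ) * r / ((L:ℝ) * z)) * r ^ 2 := by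
      apply mul_le_mul_of_nonneg_right _ (sq_nonneg r)
      exact mul_le_mul_of_nonneg_left hδ_le (by positivity)
    have h3 : (L / M : ℝ) * ((N:ℝ) * r / ((L:ℝ) * z)) * r ^ 2 = (N:ℝ) * r ^ 3 / ((M:ℝ) * z) := by
      field_simp
    rw [hc_def]
    linarith
  set X : ℝ := (N : ℝ) * r ^ 4 / (M * z) with hX_def
  have hX0 : (0:ℝ) ≤ X := by positivity
  have hcr : c * r ≤ X := by
    have h1 := mul_le_mul_of_nonneg_right hc_le hr.le
    have h2 : (N:ℝ) * r ^ 3 / ((M:ℝ) * z) * r = X := by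
      rw [hX_def]; field_simp
    linarith
  have htX : (1 + X)⁻¹ ≤ t := by
    rw [ht_def]
    exact inv_anti₀ hcr0 (by linarith)
  have h1X : (0:ℝ) < 1 + X := by linarith
  have h2X : 1 ≤ t * (1 + X) := by
    have h0 : (1 + X)⁻¹ * (1 + X) ≤ t * (1 + X) :=
      mul_le_mul_of_nonneg_right htX h1X.le
    rw [inv_mul_cancel₀ (ne_of_gt h1X)] at h0
    exact h0
  have h2 : 1 ≤ t ^ 2 * (1 + X) ^ 2 := by
    have h0 : (1:ℝ) * 1 ≤ (t * (1 + X)) * (t * (1 + X)) :=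
      mul_le_mul h2X h2X zero_le_one (le_trans zero_le_one h2X)
    calc (1:ℝ) = 1 * 1 := by ring
      _ ≤ (t * (1 + X)) * (t * (1 + X)) := h0
      _ = t ^ 2 * (1 + X) ^ 2 := by ring
  have hstep3 : l / (r * (1 + X) ^ 2) ≤ Δ := by
    have h1 : l / (r * (1 + X) ^ 2) ≤ t ^ 2 * l / r := by
      rw [div_le_div_iff₀ (by positivity) hr]
      calc l * r = l * r * 1 := by ring
        _ ≤ l * r * (t ^ 2 * (1 + X) ^ 2) :=
            mul_le_mul_of_nonneg_left h2 (by positivity)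
        _ = t ^ 2 * l * (r * (1 + X) ^ 2) := by ring
    exact le_trans (le_trans h1 hq) hΔ_ge
  have hΔpos : 0 < Δ := lt_of_lt_of_le (by positivity) hstep3
  refine ⟨?_, hΔpos⟩
  set Y : ℝ := (N : ℝ) * (sbar * r ^ 2 + r ^ 4) / (L * z) with hY_def
  have hY0 : (0:ℝ) ≤ Y := by
    rw [hY_def]
    apply div_nonneg _ (by positivity)
    exact mul_nonneg hN0 (add_nonneg (mul_nonneg hs (sq_nonneg r)) (by positivity))
  have hfinal : l ^ 2 / ((1 + Y) ^ 2 * (1 + X) ^ 2 * r ^ 3) ≤ l / (r * (1 + X) ^ 2) := by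
    rw [div_le_div_iff₀ (by positivity) (by positivity)]
    have h2Y : 1 ≤ (1 + Y) ^ 2 := by
      have hh : (1:ℝ) ≤ 1 + Y := by linarith
      calc (1:ℝ) = 1 * 1 := by ring
        _ ≤ (1 + Y) * (1 + Y) := mul_le_mul hh hh zero_le_one (by linarith)
        _ = (1 + Y) ^ 2 := by ring
    have hA : l ≤ (1 + Y) ^ 2 * r ^ 2 := by
      calc l ≤ r ^ 2 := hl_r2
        _ = 1 * r ^ 2 := by ring
        _ ≤ (1 + Y) ^ 2 * r ^ 2 := mul_le_mul_of_nonneg_right h2Y (sq_nonneg r)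
    calc l ^ 2 * (r * (1 + X) ^ 2) = l * (r * (1 + X) ^ 2) * l := by ring
      _ ≤ l * (r * (1 + X) ^ 2) * ((1 + Y) ^ 2 * r ^ 2) :=
          mul_le_mul_of_nonneg_left hA (by positivity)
      _ = l * ((1 + Y) ^ 2 * (1 + X) ^ 2 * r ^ 3) := by ring
  exact le_trans hfinal hstep3
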